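/- Let x ∈ (0,1) be irrational with regular continued fraction convergents p_j/q_j, and for n ≥ 0 write n = a_1 + ⋯ + a_{j_n} + λ_n with j_n ≥ 0 and 0 ≤ λ_n < a_{j_n+1}. Let ε_1 ε_2 ⋯ ε_n = 0^{a_1-1} 1 0^{a_2-1} 1 ⋯ 0^{a_{j_n}-1} 1 0^{λ_n} be the associated binary word and A_{[0,n]} = A_{ε_1} ⋯ A_{ε_n} (with A_0 = [[1,0],[1,1]], A_1 = [[0,1],[1,1]]). Then A_{[0,n]} = [[λ_n p_{j_n} + p_{j_n-1}, p_{j_n}],[λ_n q_{j_n} + q_{j_n-1}, q_{j_n}]]. -/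

import Mathlib

/-!
`A_0^k = [[1, 0], [k, 1]]`, so each block `A_0^{a-1} A_1` of the word is the continued-fraction
matrix `[[0, 1], [1, a]]`. The product of the first `j` blocks is therefore
`[[p_{j-1}, p_j], [q_{j-1}, q_j]]` by the convergent recurrences, and the trailing factor `A_0^λ`
adds `λ` times the second column to the first.
-/

noncomputable section

def A0 : Matrix (Fin 2) (Fin 2) ℤ := !![1, 0; 1, 1]
def A1 : Matrix (Fin 2) (Fin 2) ℤ := !![0, 1; 1, 1]

/-- `prodPart a j = A_0^{a_1-1} A_1 ⋯ A_0^{a_j-1} A_1`, the product of the blocks of the word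
`ε_1 ε_2 ⋯ = 0^{a_1-1} 1 0^{a_2-1} 1 ⋯` corresponding to the first `j` partial quotients. -/
def prodPart (a : ℕ → ℤ) : ℕ → Matrix (Fin 2) (Fin 2) ℤ
  | 0 => 1
  | j + 1 => prodPart a j * (A0 ^ (a (j + 1) - 1).toNat * A1)

lemma A0_pow (k : ℕ) : A0 ^ k = !![1, 0; (k : ℤ), 1] := by
  induction k with
  | zero => simp [Matrix.one_fin_two]
  | succ k ih =>
    rw [pow_succ, ih, A0, Matrix.mul_fin_two]
    simp

lemma A0_pow_toNat_sub_one_mul_A1 {c : ℤ} (hc : 1 ≤ c) :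
    A0 ^ (c - 1).toNat * A1 = !![0, 1; 1, c] := by
  rw [A0_pow, Int.toNat_of_nonneg (by omega), A1, Matrix.mul_fin_two]
  simp

lemma mul_A0_pow (m : Matrix (Fin 2) (Fin 2) ℤ) (k : ℕ) :
    m * A0 ^ k = !![k * m 0 1 + m 0 0, m 0 1; k * m 1 1 + m 1 0, m 1 1] := by
  rw [A0_pow, Matrix.eta_fin_two m, Matrix.mul_fin_two]
  simp [add_comm, mul_comm]

lemma prodPart_eq_convergents (a p q : ℕ → ℤ) (ha : ∀ n : ℕ, 1 ≤ n → 1 ≤ a n)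
    (hp0 : p 0 = 1) (hq0 : q 0 = 0) (hp1 : p 1 = 0) (hq1 : q 1 = 1)
    (hp : ∀ n : ℕ, p (n + 2) = a (n + 1) * p (n + 1) + p n)
    (hq : ∀ n : ℕ, q (n + 2) = a (n + 1) * q (n + 1) + q n) (j : ℕ) :
    prodPart a j = !![p j, p (j + 1); q j, q (j + 1)] := by
  induction j with
  | zero => simp [prodPart, hp0, hq0, hp1, hq1, Matrix.one_fin_two]
  | succ j ih =>
    rw [prodPart, ih, A0_pow_toNat_sub_one_mul_A1 (ha (j + 1) j.succ_pos), hp, hq,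
      Matrix.mul_fin_two]
    simp [add_comm, mul_comm]

theorem stmt12_general
    (a : ℕ → ℤ) (ha : ∀ n : ℕ, 1 ≤ n → 1 ≤ a n)
    (p q : ℕ → ℤ)
    (hp0 : p 0 = 1) (hq0 : q 0 = 0) (hp1 : p 1 = 0) (hq1 : q 1 = 1)
    (hp : ∀ n : ℕ, p (n + 2) = a (n + 1) * p (n + 1) + p n)
    (hq : ∀ n : ℕ, q (n + 2) = a (n + 1) * q (n + 1) + q n)
    (j : ℕ) (lam : ℤ) (hlam0 : 0 ≤ lam) :
    prodPart a j * A0 ^ lam.toNat =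
      !![lam * p (j + 1) + p j, p (j + 1); lam * q (j + 1) + q j, q (j + 1)] := by
  rw [mul_A0_pow, prodPart_eq_convergents a p q ha hp0 hq0 hp1 hq1 hp hq j,
    Int.toNat_of_nonneg hlam0]
  simp

/-- For `x ∈ (0,1)` irrational with partial quotients `a` (here `a j = a_j`, `j ≥ 1`,
witnessed by the tails `t`), convergents `p j = p_{j-1}`, `q j = q_{j-1}` (shifted index),
and `n = a_1 + ⋯ + a_j + λ` with `0 ≤ λ < a_{j+1}`, the matrix
`A_{[0,n]} = A_{ε_1} ⋯ A_{ε_n} = A_0^{a_1-1} A_1 ⋯ A_0^{a_j-1} A_1 A_0^λ` equals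
`[[λ p_j + p_{j-1}, p_j],[λ q_j + q_{j-1}, q_j]]`. -/
theorem stmt12 (x : ℝ) (hirr : Irrational x) (hx0 : 0 < x) (hx1 : x < 1)
    (a : ℕ → ℤ) (ha : ∀ n : ℕ, 1 ≤ n → 1 ≤ a n)
    (t : ℕ → ℝ) (ht0 : t 0 = x)
    (ht : ∀ n : ℕ, 0 < t n ∧ t n < 1 ∧ t n = 1 / (a (n + 1) + t (n + 1)))
    (p q : ℕ → ℤ)
    (hp0 : p 0 = 1) (hq0 : q 0 = 0) (hp1 : p 1 = 0) (hq1 : q 1 = 1)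
    (hp : ∀ n : ℕ, p (n + 2) = a (n + 1) * p (n + 1) + p n)
    (hq : ∀ n : ℕ, q (n + 2) = a (n + 1) * q (n + 1) + q n)
    (j : ℕ) (lam : ℤ) (hlam0 : 0 ≤ lam) (hlam : lam < a (j + 1)) :
    prodPart a j * A0 ^ lam.toNat =
      !![lam * p (j + 1) + p j, p (j + 1); lam * q (j + 1) + q j, q (j + 1)] :=
  stmt12_general a ha p q hp0 hq0 hp1 hq1 hp hq j lam hlam0

end
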